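/- arXiv:1506.02979 — 3 statements merged into one kernel-verified Lean document; each statement's English description precedes it below -/
import Mathlib

section
/- Let n ≥ 2. The near-semiring 𝒩 has no left identity element: there is no u ∈ 𝒩 such that ux = x for all x ∈ 𝒩. Equivalently, there is no u ∈ A^+(B_n) such that uf = f for every f ∈ A^+(B_n), where x(uf) = (xu)f (i.e. uf is the map sending each x ∈ B_n to the value of f at the value of u at x). -/
/-!
Common setup: the Brandt semigroup `B n`, self-maps with pointwise addition and
composition product, affine maps, the affine near-semiring `A⁺(Bₙ)`, and the
zero-symmetric near-semiring `𝒩 = A⁺(Bₙ) ∪ {0}`.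
-/

/-- The Brandt semigroup `Bₙ`: pairs `(i,j)` with `i,j ∈ [n]`, together with the
zero element `ϑ` (represented by `none`). -/
abbrev B (n : ℕ) : Type := Option (Fin n × Fin n)

/-- Addition in the Brandt semigroup: `(i,j)+(k,l) = (i,l)` if `j = k`, and `ϑ` otherwise;
`ϑ` is absorbing. -/
def badd {n : ℕ} : B n → B n → B n
  | some (i, j), some (k, l) => if j = k then some (i, l) else none
  | _, _ => none

/-- Pointwise addition of self-maps of `B n`:  `x(f+g) = xf + xg`. -/
def madd {n : ℕ} (f g : B n → B n) : B n → B n := fun x => badd (f x) (g x)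

/-- The product of self-maps of `B n`: `x(fg) = (xf)g`. -/
def mcomp {n : ℕ} (f g : B n → B n) : B n → B n := fun x => g (f x)

/-- An additive endomorphism of the Brandt semigroup. -/
def IsEndo {n : ℕ} (e : B n → B n) : Prop := ∀ a b, e (badd a b) = badd (e a) (e b)

/-- An affine map: the pointwise sum of an additive endomorphism and a constant map. -/
def IsAffine {n : ℕ} (f : B n → B n) : Prop :=
  ∃ e c, IsEndo e ∧ ∀ x, f x = badd (e x) c

/-- `A⁺(Bₙ)`: the subsemigroup of `(M(Bₙ), +)` generated by the affine maps. -/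
inductive Aplus (n : ℕ) : (B n → B n) → Prop
  | affine {f : B n → B n} : IsAffine f → Aplus n f
  | add {f g : B n → B n} : Aplus n f → Aplus n g → Aplus n (madd f g)

lemma isEndo_constBot {n : ℕ} : IsEndo (fun _ : B n => (none : B n)) := by
  intro a b; rfl

lemma isEndo_constIdem {n : ℕ} (p : Fin n) :
    IsEndo (fun _ : B n => (some (p, p) : B n)) := by
  intro a b; simp [badd]

/-- Every constant map is affine. -/
lemma isAffine_const {n : ℕ} (c : B n) : IsAffine (fun _ : B n => c) := by
  match c with
  | none => exact ⟨fun _ => none, none, isEndo_constBot, fun x => rfl⟩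
  | some (p, q) =>
      exact ⟨fun _ => some (p, p), some (p, q), isEndo_constIdem p, fun x => by simp [badd]⟩

lemma aplus_const {n : ℕ} (c : B n) : Aplus n (fun _ : B n => c) :=
  Aplus.affine (isAffine_const c)

lemma aplus_comp_endo {n : ℕ} {e : B n → B n} (he : IsEndo e)
    {f : B n → B n} (hf : Aplus n f) : Aplus n (fun x => e (f x)) := by
  induction hf with
  | affine h =>
      rename_i f0
      obtain ⟨e', c, he', hfe⟩ := h
      refine Aplus.affine ⟨fun x => e (e' x), e c, fun a b => ?_, fun x => ?_⟩
      · show e (e' (badd a b)) = badd (e (e' a)) (e (e' b))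
        rw [he', he]
      · show e (f0 x) = badd (e (e' x)) (e c)
        rw [hfe, he]
  | add h1 h2 ih1 ih2 =>
      rename_i g1 g2
      have heq : (fun x => e (madd g1 g2 x))
          = madd (fun x => e (g1 x)) (fun x => e (g2 x)) := by
        funext x; exact he (g1 x) (g2 x)
      rw [heq]
      exact Aplus.add ih1 ih2

/-- `A⁺(Bₙ)` is closed under the product. -/
lemma aplus_comp {n : ℕ} {f g : B n → B n} (hf : Aplus n f) (hg : Aplus n g) :
    Aplus n (mcomp f g) := by
  induction hg with
  | affine h =>
      rename_i g0
      obtain ⟨e, c, he, hge⟩ := h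
      have heq : mcomp f g0 = madd (fun x => e (f x)) (fun _ => c) := by
        funext x; exact hge (f x)
      rw [heq]
      exact Aplus.add (aplus_comp_endo he hf) (aplus_const c)
  | add h1 h2 ih1 ih2 =>
      exact Aplus.add ih1 ih2

/-- `𝒩 = A⁺(Bₙ) ∪ {0}`: the zero-symmetric affine near-semiring, with a new
zero element `0` (represented by `none`) adjoined to `A⁺(Bₙ)`. -/
abbrev N (n : ℕ) : Type := Option {f : B n → B n // Aplus n f}

instance (n : ℕ) : Zero (N n) := ⟨none⟩

/-- Addition in `𝒩`: `0` is the additive identity; on `A⁺(Bₙ)` it is pointwise addition. -/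
instance (n : ℕ) : Add (N n) :=
  ⟨fun a b =>
    match a, b with
    | none, b => b
    | a, none => a
    | some f, some g => some ⟨madd f.1 g.1, Aplus.add f.2 g.2⟩⟩

/-- Multiplication in `𝒩`: `0` is absorbing; on `A⁺(Bₙ)` it is the product `fg`. -/
instance (n : ℕ) : Mul (N n) :=
  ⟨fun a b =>
    match a, b with
    | some f, some g => some ⟨mcomp f.1 g.1, aplus_comp f.2 g.2⟩
    | _, _ => none⟩

/-- The element of `𝒩` determined by a map in `A⁺(Bₙ)`. -/
def ofA {n : ℕ} {f : B n → B n} (hf : Aplus n f) : N n := some ⟨f, hf⟩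

/-- The constant map `ξ_c`, as an element of `𝒩`. -/
def xiN (n : ℕ) (c : B n) : N n := ofA (aplus_const c)

/-- `𝒞 = C_{Bₙ} ∪ {0}`: the constant maps together with `0`, as a subset of `𝒩`. -/
def Cset (n : ℕ) : Set (N n) := insert 0 (Set.range (xiN n))

/-- The relation `(A⁺(Bₙ) × A⁺(Bₙ)) ∪ {(0,0)}` on `𝒩`. -/
def theta (n : ℕ) (a b : N n) : Prop := (a ≠ 0 ∧ b ≠ 0) ∨ (a = 0 ∧ b = 0)

/-- A congruence of the semigroup `(𝒩, +)`. -/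
structure IsAddCong (n : ℕ) (r : N n → N n → Prop) : Prop where
  refl : ∀ a, r a a
  symm : ∀ {a b}, r a b → r b a
  trans : ∀ {a b c}, r a b → r b c → r a c
  add_right : ∀ {a b} (c), r a b → r (a + c) (b + c)
  add_left : ∀ {a b} (c), r a b → r (c + a) (c + b)

/-- The equivalence relations on `𝒩` whose class of `0` is a right ideal:
compatible with `+` on both sides and with `·` on the right. -/
structure IsRightCong (n : ℕ) (r : N n → N n → Prop) extends IsAddCong n r : Prop where
  mul_right : ∀ {a b} (c), r a b → r (a * c) (b * c)

/-- A congruence of the near-semiring `𝒩`. -/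
structure IsNSCong (n : ℕ) (r : N n → N n → Prop) extends IsAddCong n r : Prop where
  mul_right : ∀ {a b} (c), r a b → r (a * c) (b * c)
  mul_left : ∀ {a b} (c), r a b → r (c * a) (c * b)

/-- The singleton-support map `σ^{(k,l)}_{(p,q)}` sending `(k,l)` to `(p,q)` and
everything else to `ϑ`. -/
def sgl {n : ℕ} (k l p q : Fin n) : B n → B n :=
  fun x => if x = some (k, l) then some (p, q) else none

/-- The `n`-support map `(p,q;σ)` sending `(i,p)` to `(iσ,q)` and everything else to `ϑ`. -/
def nsupp {n : ℕ} (p q : Fin n) (σ : Equiv.Perm (Fin n)) : B n → B n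
  | some (i, j) => if j = p then some (σ i, q) else none
  | none => none

/-- The endomorphism `(i,j) ↦ (iσ, jσ)` of `Bₙ`. -/
def permEndo {n : ℕ} (σ : Equiv.Perm (Fin n)) : B n → B n
  | some (i, j) => some (σ i, σ j)
  | none => none

lemma isEndo_permEndo {n : ℕ} (σ : Equiv.Perm (Fin n)) : IsEndo (permEndo σ) := by
  rintro (_ | ⟨i, j⟩) (_ | ⟨k, l⟩) <;> simp [badd, permEndo]
  by_cases h : j = k
  · simp [h, permEndo]
  · simp [h, fun hc => h (σ.injective hc), permEndo, badd]

lemma aplus_nsupp {n : ℕ} (p q : Fin n) (σ : Equiv.Perm (Fin n)) :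
    Aplus n (nsupp p q σ) := by
  refine Aplus.affine ⟨permEndo σ, some (σ p, q), isEndo_permEndo σ, ?_⟩
  rintro (_ | ⟨i, j⟩)
  · rfl
  · show nsupp p q σ (some (i, j)) = badd (some (σ i, σ j)) (some (σ p, q))
    by_cases h : j = p
    · simp [nsupp, badd, h]
    · simp [nsupp, badd, h, fun hc => h (σ.injective hc)]

lemma sgl_eq_madd {n : ℕ} (k l p q : Fin n) :
    sgl k l p q = madd (fun _ : B n => (some (p, q) : B n)) (nsupp l q (Equiv.swap k q)) := by
  funext x
  rcases x with _ | ⟨i, j⟩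
  · rfl
  · by_cases hj : j = l
    · by_cases hi : i = k
      · subst hi; subst hj
        simp [sgl, madd, nsupp, badd, Equiv.swap_apply_left]
      · have hs : Equiv.swap k q i ≠ q := fun hc =>
          hi ((Equiv.swap k q).injective (hc.trans (Equiv.swap_apply_left k q).symm))
        simp [sgl, madd, nsupp, badd, hj, hi, Ne.symm hs]
    · simp [sgl, madd, nsupp, badd, hj]

lemma aplus_sgl {n : ℕ} (k l p q : Fin n) : Aplus n (sgl k l p q) := by
  rw [sgl_eq_madd]
  exact Aplus.add (aplus_const _) (aplus_nsupp _ _ _)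

/-- The singleton-support map `σ^{(k,l)}_{(p,q)}`, as an element of `𝒩`. -/
def sglN (n : ℕ) (k l p q : Fin n) : N n := ofA (aplus_sgl k l p q)

/-- The `n`-support map `(p,q;σ)`, as an element of `𝒩`. -/
def nsuppN (n : ℕ) (p q : Fin n) (σ : Equiv.Perm (Fin n)) : N n := ofA (aplus_nsupp p q σ)

/-!
Every map in `A⁺(Bₙ)` is *column coherent*: any two arguments in different columns that it
does not send to `ϑ` have the same image. For an affine map `e + ξ_c` this is because either
`e ϑ ≠ ϑ`, which forces `e` to be constant, or `e ϑ = ϑ`, in which case `e + ξ_c` has support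
in a single column; the property is preserved by pointwise sums. A left identity `u` must fix
every `(k, l)`, as seen by composing with the singleton-support maps, so for `n ≥ 2` it is not
column coherent.
-/

section Brandt

variable {n : ℕ}

@[simp]
lemma badd_none_left (a : B n) : badd none a = none := by
  rcases a with _ | ⟨i, j⟩ <;> rfl

@[simp]
lemma badd_none_right (a : B n) : badd a none = none := by
  rcases a with _ | ⟨i, j⟩ <;> rfl

lemma badd_eq_some_iff {a b : B n} {i l : Fin n} :
    badd a b = some (i, l) ↔ ∃ j, a = some (i, j) ∧ b = some (j, l) := by
  rcases a with _ | ⟨a₁, a₂⟩ <;> rcases b with _ | ⟨b₁, b₂⟩ <;> simp [badd]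
  aesop

lemma ne_none_of_badd_ne_none {a b : B n} (h : badd a b ≠ none) : a ≠ none ∧ b ≠ none := by
  constructor <;> rintro rfl <;> simp at h

lemma eq_some_of_badd_eq_left {z : B n} {i j : Fin n}
    (h : badd (some (i, j)) z = some (i, j)) : z = some (j, j) := by
  obtain ⟨k, hk, rfl⟩ := badd_eq_some_iff.mp h
  cases hk
  rfl

lemma IsEndo.apply_diag {e : B n → B n} (he : IsEndo e) {i j a b : Fin n}
    (h : e (some (i, j)) = some (a, b)) : e (some (j, j)) = some (b, b) := by
  refine eq_some_of_badd_eq_left (i := a) ?_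
  rw [← h, ← he]
  simp [badd]

lemma IsEndo.apply_eq_apply_none {e : B n → B n} (he : IsEndo e) (hne : e none ≠ none)
    (x : B n) : e x = e none := by
  obtain ⟨⟨p, q⟩, hpq⟩ := Option.ne_none_iff_exists'.mp hne
  have idem : ∀ y, e y = some (q, q) := fun y =>
    eq_some_of_badd_eq_left (by rw [← hpq, ← he, badd_none_left])
  rw [idem, idem]

end Brandt

section ColumnCoherent

variable {n : ℕ}

def ColumnCoherent (f : B n → B n) : Prop :=
  ∀ x y : Fin n × Fin n, x.2 ≠ y.2 → f (some x) ≠ none → f (some y) ≠ none →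
    f (some x) = f (some y)

lemma ColumnCoherent.madd {f g : B n → B n} (hf : ColumnCoherent f) (hg : ColumnCoherent g) :
    ColumnCoherent (madd f g) := by
  intro x y hxy hx hy
  obtain ⟨hfx, hgx⟩ := ne_none_of_badd_ne_none hx
  obtain ⟨hfy, hgy⟩ := ne_none_of_badd_ne_none hy
  simp only [_root_.madd, hf x y hxy hfx hfy, hg x y hxy hgx hgy]

lemma IsAffine.columnCoherent {f : B n → B n} (hf : IsAffine f) : ColumnCoherent f := by
  obtain ⟨e, c, he, rfl⟩ : ∃ e c, IsEndo e ∧ f = fun x => badd (e x) c := by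
    obtain ⟨e, c, he, hfe⟩ := hf
    exact ⟨e, c, he, funext hfe⟩
  rintro ⟨i, j⟩ ⟨i', j'⟩ (hjj' : j ≠ j') hx hy
  obtain hbot | hbot := ne_or_eq (e none) none
  · simp only [he.apply_eq_apply_none hbot]
  -- Both `e (j, j)` and `e (j', j')` would be the idempotent at the row of `c`,
  -- while their sum is `e ϑ = ϑ`.
  exfalso
  have diag_of_ne_none : ∀ a b : Fin n, badd (e (some (a, b))) c ≠ none →
      ∃ m l, c = some (m, l) ∧ e (some (b, b)) = some (m, m) := by
    intro a b h
    obtain ⟨⟨r, m⟩, hrm⟩ := Option.ne_none_iff_exists'.mp h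
    obtain ⟨k, hk, hc⟩ := badd_eq_some_iff.mp hrm
    exact ⟨k, m, hc, he.apply_diag hk⟩
  obtain ⟨m, l, hc, hj⟩ := diag_of_ne_none i j hx
  obtain ⟨m', l', hc', hj'⟩ := diag_of_ne_none i' j' hy
  obtain ⟨rfl, -⟩ : m = m' ∧ l = l' := by simpa [hc] using hc'
  have := he (some (j, j)) (some (j', j'))
  simp [badd, hjj', hbot, hj, hj'] at this

lemma Aplus.columnCoherent {f : B n → B n} (hf : Aplus n f) : ColumnCoherent f := by
  induction hf with
  | affine h => exact h.columnCoherent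
  | add _ _ ihf ihg => exact ihf.madd ihg

end ColumnCoherent

lemma eq_of_sgl_ne_none {n : ℕ} {k l p q : Fin n} {x : B n} (h : sgl k l p q x ≠ none) :
    x = some (k, l) := by
  by_contra hx
  simp [sgl, hx] at h

lemma apply_some_eq_self_of_forall_mcomp_eq {n : ℕ} {u : B n → B n}
    (hu : ∀ f : B n → B n, Aplus n f → mcomp u f = f) (k l : Fin n) :
    u (some (k, l)) = some (k, l) := by
  have h : sgl k l k l (u (some (k, l))) = sgl k l k l (some (k, l)) :=
    congrFun (hu _ (aplus_sgl k l k l)) (some (k, l))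
  refine eq_of_sgl_ne_none (p := k) (q := l) ?_
  rw [h]
  simp [sgl]

lemma not_exists_aplus_left_identity {n : ℕ} (hn : 2 ≤ n) :
    ¬ ∃ u : B n → B n, Aplus n u ∧ ∀ f : B n → B n, Aplus n f → mcomp u f = f := by
  rintro ⟨u, hu, hid⟩
  let i : Fin n := ⟨0, by omega⟩
  let j : Fin n := ⟨1, by omega⟩
  have hij : i ≠ j := by simp [i, j, Fin.ext_iff]
  have := hu.columnCoherent (i, i) (i, j) hij
  simp [apply_some_eq_self_of_forall_mcomp_eq hid, hij] at this

lemma exists_aplus_left_identity_of_mul {n : ℕ} (h : ∃ u : N n, ∀ x : N n, u * x = x) :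
    ∃ u : B n → B n, Aplus n u ∧ ∀ f : B n → B n, Aplus n f → mcomp u f = f := by
  obtain ⟨_ | ⟨u, hu⟩, hid⟩ := h
  · exact absurd (hid (xiN n none)) (by simp [xiN, ofA])
  · refine ⟨u, hu, fun f hf => ?_⟩
    exact congrArg Subtype.val (Option.some.inj (hid (ofA hf)))

/-- Let `n ≥ 2`. The near-semiring `𝒩` has no left identity element;
equivalently, there is no `u ∈ A⁺(Bₙ)` with `uf = f` for every `f ∈ A⁺(Bₙ)`. -/
theorem stmt5 (n : ℕ) (hn : 2 ≤ n) :
    (¬ ∃ u : N n, ∀ x : N n, u * x = x) ∧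
    (¬ ∃ u : B n → B n, Aplus n u ∧ ∀ f : B n → B n, Aplus n f → mcomp u f = f) :=
  ⟨fun h => not_exists_aplus_left_identity hn (exists_aplus_left_identity_of_mul h),
    not_exists_aplus_left_identity hn⟩
end

section
/- Let n ≥ 2, let ∼ be a congruence of the near-semiring 𝒩 that is not the universal relation 𝒩 × 𝒩, and let f ∈ 𝒩 with f ≠ 0 and f ≠ ξ_ϑ. If f ∼ ξ_ϑ, then ∼ equals (A^+(B_n) × A^+(B_n)) ∪ {(0,0)}; that is, any two elements of A^+(B_n) are congruent to each other and 0 is congruent only to itself. -/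
lemma badd_none {n : ℕ} (a : B n) : badd a none = none := by
  rcases a with _ | ⟨i, j⟩ <;> rfl

lemma badd_col {n : ℕ} {q : Fin n} {a b : B n} (hb : badd b (some (q, q)) = b) :
    badd (badd a b) (some (q, q)) = badd a b := by
  rcases a with _ | ⟨i, j⟩
  · rfl
  rcases b with _ | ⟨k, l⟩
  · simp [badd]
  · have hl : l = q := by
      by_cases h : l = q
      · exact h
      · simp [badd, h] at hb
    subst hl
    by_cases hjk : j = k <;> simp [badd, hjk]

/-- Every map in `A⁺(Bₙ)` has range inside a fixed column (together with `ϑ`). -/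
lemma aplus_column {n : ℕ} (q0 : Fin n) {h : B n → B n} (hh : Aplus n h) :
    ∃ q : Fin n, ∀ x, badd (h x) (some (q, q)) = h x := by
  induction hh with
  | affine haf =>
    obtain ⟨e, c, he, hfe⟩ := haf
    rcases c with _ | ⟨k, l⟩
    · exact ⟨q0, fun x => by rw [hfe]; rcases e x with _ | ⟨i, j⟩ <;> simp [badd]⟩
    · refine ⟨l, fun x => ?_⟩
      rw [hfe]
      rcases e x with _ | ⟨i, j⟩
      · rfl
      · by_cases hj : j = k <;> simp [badd, hj]
  | add h1 h2 ih1 ih2 =>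
    obtain ⟨q, hq⟩ := ih2
    exact ⟨q, fun x => badd_col (hq x)⟩

/-- Let `n ≥ 2`, let `∼` be a non-universal congruence of the near-semiring
`𝒩`, and let `f ∈ 𝒩` with `f ≠ 0`, `f ≠ ξ_ϑ`. If `f ∼ ξ_ϑ`, then `∼` equals
`(A⁺(Bₙ) × A⁺(Bₙ)) ∪ {(0,0)}`. -/
theorem stmt8 (n : ℕ) (hn : 2 ≤ n) (r : N n → N n → Prop) (hcong : IsNSCong n r)
    (hnotuniv : ¬ ∀ a b : N n, r a b)
    (f : N n) (hf0 : f ≠ 0) (hfxi : f ≠ xiN n none) (h : r f (xiN n none)) :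
    ∀ a b : N n, r a b ↔ theta n a b := by
  -- f is a nonzero element, i.e. an actual map h0 in A⁺
  obtain ⟨⟨h0, hh0⟩, rfl⟩ : ∃ g', f = some g' := Option.ne_none_iff_exists'.mp hf0
  -- h0 is not the constant-ϑ map, pick a point where it is nonzero
  have hx : ∃ x₀, h0 x₀ ≠ none := by
    by_contra hcon
    push_neg at hcon
    exact hfxi (congrArg some (Subtype.ext (funext fun x => hcon x)))
  obtain ⟨x₀, hx₀⟩ := hx
  rcases hp : h0 x₀ with _ | ⟨p, q⟩
  · exact absurd hp hx₀
  -- Step 1: the constant ξ_{(p,q)} is related to ξ_ϑ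
  have hpq : r (xiN n (some (p, q))) (xiN n none) := by
    have h1 := hcong.mul_left (xiN n x₀) h
    have e1 : xiN n x₀ * (some ⟨h0, hh0⟩ : N n) = xiN n (some (p, q)) :=
      congrArg some (Subtype.ext (funext fun y => hp))
    have e2 : xiN n x₀ * xiN n none = xiN n none :=
      congrArg some (Subtype.ext (funext fun y => rfl))
    rwa [e1, e2] at h1
  -- Step 2: every diagonal constant ξ_{(q',q')} is related to ξ_ϑ
  have hdiag : ∀ q' : Fin n, r (xiN n (some (q', q'))) (xiN n none) := by
    intro q'
    have h2 := hcong.mul_right (sglN n p q q' q') hpq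
    have e3 : xiN n (some (p, q)) * sglN n p q q' q' = xiN n (some (q', q')) :=
      congrArg some (Subtype.ext (funext fun y => by simp [mcomp, sgl]))
    have e4 : xiN n none * sglN n p q q' q' = xiN n none :=
      congrArg some (Subtype.ext (funext fun y => by simp [mcomp, sgl]))
    rwa [e3, e4] at h2
  -- Step 3: every nonzero element is related to ξ_ϑ
  have hmain : ∀ a : N n, a ≠ 0 → r a (xiN n none) := by
    intro a ha
    obtain ⟨⟨g, hg⟩, rfl⟩ : ∃ g', a = some g' := Option.ne_none_iff_exists'.mp ha
    obtain ⟨qc, hqc⟩ := aplus_column (⟨0, by omega⟩ : Fin n) hg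
    have h3 := hcong.add_left (some ⟨g, hg⟩ : N n) (hdiag qc)
    have e5 : (some ⟨g, hg⟩ : N n) + xiN n (some (qc, qc)) = some ⟨g, hg⟩ :=
      congrArg some (Subtype.ext (funext fun x => hqc x))
    have e6 : (some ⟨g, hg⟩ : N n) + xiN n none = xiN n none :=
      congrArg some (Subtype.ext (funext fun x => badd_none (g x)))
    rwa [e5, e6] at h3
  -- Step 4: 0 is related only to 0 (else r would be universal)
  have hzero : ∀ a : N n, r 0 a → a = 0 := by
    intro a h0a
    by_contra ha
    apply hnotuniv
    have hra : ∀ x : N n, x ≠ 0 → r 0 x := fun x hx' =>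
      hcong.trans h0a (hcong.trans (hmain a ha) (hcong.symm (hmain x hx')))
    intro x y
    rcases eq_or_ne x 0 with rfl | hx'
    · rcases eq_or_ne y 0 with rfl | hy'
      · exact hcong.refl 0
      · exact hra y hy'
    · rcases eq_or_ne y 0 with rfl | hy'
      · exact hcong.symm (hra x hx')
      · exact hcong.trans (hmain x hx') (hcong.symm (hmain y hy'))
  -- Conclusion
  intro a b
  constructor
  · intro hab
    rcases eq_or_ne a 0 with rfl | ha
    · exact Or.inr ⟨rfl, hzero b hab⟩
    · rcases eq_or_ne b 0 with rfl | hb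
      · exact (ha (hzero a (hcong.symm hab))).elim
      · exact Or.inl ⟨ha, hb⟩
  · intro hth
    rcases hth with ⟨ha, hb⟩ | ⟨rfl, rfl⟩
    · exact hcong.trans (hmain a ha) (hcong.symm (hmain b hb))
    · exact hcong.refl 0
end

section
/- Let n ≥ 2 and let ∼ be a congruence of the near-semiring 𝒩. If ξ_{(k,l)} ∼ ξ_{(u,v)} for two distinct full-support constant maps, i.e. (k,l), (u,v) ∈ [n]×[n] with (k,l) ≠ (u,v), then there exists h ∈ A^+(B_n) with h ≠ ξ_ϑ and h ∼ ξ_ϑ. -/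
/-! Right multiplication by the singleton-support map `σ^{(k,l)}_{(k,l)}` fixes `ξ_{(k,l)}`
and sends every other constant map `ξ_{(u,v)}` to `ξ_ϑ`; so the congruence relates
`ξ_{(k,l)}` to `ξ_ϑ`. -/

lemma xiN_ne_zero {n : ℕ} (c : B n) : xiN n c ≠ 0 :=
  Option.some_ne_none _

lemma xiN_injective (n : ℕ) : Function.Injective (xiN n) := fun _ _ hcd =>
  congrFun (congrArg Subtype.val (Option.some.inj hcd)) none

lemma xiN_mul_ofA {n : ℕ} (c : B n) {f : B n → B n} (hf : Aplus n f) :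
    xiN n c * ofA hf = xiN n (f c) :=
  rfl

lemma sgl_apply_self {n : ℕ} (k l p q : Fin n) : sgl k l p q (some (k, l)) = some (p, q) :=
  if_pos rfl

lemma sgl_apply_of_ne {n : ℕ} {k l u v : Fin n} (p q : Fin n)
    (hne : ((k, l) : Fin n × Fin n) ≠ (u, v)) : sgl k l p q (some (u, v)) = none :=
  if_neg fun h => hne (Option.some.inj h).symm

theorem stmt12_general (n : ℕ) (r : N n → N n → Prop) (hcong : IsNSCong n r)
    (k l u v : Fin n) (hne : ((k, l) : Fin n × Fin n) ≠ (u, v))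
    (h : r (xiN n (some (k, l))) (xiN n (some (u, v)))) :
    ∃ h' : N n, h' ≠ 0 ∧ h' ≠ xiN n none ∧ r h' (xiN n none) := by
  refine ⟨xiN n (some (k, l)), xiN_ne_zero _, (xiN_injective n).ne (Option.some_ne_none _), ?_⟩
  have hmul := hcong.mul_right (sglN n k l k l) h
  rwa [sglN, xiN_mul_ofA, xiN_mul_ofA, sgl_apply_self, sgl_apply_of_ne _ _ hne] at hmul

/-- Let `n ≥ 2` and let `∼` be a congruence of the near-semiring `𝒩`.
If `ξ_{(k,l)} ∼ ξ_{(u,v)}` for two distinct full-support constant maps, then some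
`h ∈ A⁺(Bₙ)` with `h ≠ ξ_ϑ` satisfies `h ∼ ξ_ϑ`. -/
theorem stmt12 (n : ℕ) (hn : 2 ≤ n) (r : N n → N n → Prop) (hcong : IsNSCong n r)
    (k l u v : Fin n) (hne : ((k, l) : Fin n × Fin n) ≠ (u, v))
    (h : r (xiN n (some (k, l))) (xiN n (some (u, v)))) :
    ∃ h' : N n, h' ≠ 0 ∧ h' ≠ xiN n none ∧ r h' (xiN n none) :=
  stmt12_general n r hcong k l u v hne h
end
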